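/- The ring game G admits fairness: every improvement path in G is infinite and every player is selected in it infinitely often. -/

import Mathlib

/-!
Game-theoretic formalization of Dijkstra's self-stabilization (Apt & Shoja).
Players are `Fin n`; a joint strategy is `s : Fin n → C`.
-/

/-- Payoff in the ring game `G` on the directed ring `0 → 1 → ⋯ → n-1 → 0`:
player `0` plays the anti-coordination game with respect to its predecessor
(player `n-1`, i.e. `0 - 1` in `Fin n`); every other player `i` plays the
coordination game with respect to its predecessor `i - 1`. -/
def ringPayoff {n : ℕ} [NeZero n] {C : Type*} [DecidableEq C]
    (s : Fin n → C) (i : Fin n) : ℕ :=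
  if i = 0 then (if s i = s (i - 1) then 0 else 1)
  else (if s i = s (i - 1) then 1 else 0)

/-- `s i` is a best response of player `i` to the strategies of the others in `s`. -/
def BestResponse {n : ℕ} {C : Type*}
    (p : (Fin n → C) → Fin n → ℕ) (s : Fin n → C) (i : Fin n) : Prop :=
  ∀ c : C, p (Function.update s i c) i ≤ p s i

/-- An improvement step from `s` to `s'` in which player `i` is selected:
only player `i` changes its strategy and its payoff strictly increases. -/
def StepAt {n : ℕ} {C : Type*}
    (p : (Fin n → C) → Fin n → ℕ) (i : Fin n) (s s' : Fin n → C) : Prop :=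
  (∀ j, j ≠ i → s' j = s j) ∧ p s i < p s' i

/-- A joint strategy is legitimate if exactly one player does not play a best response. -/
def Legitimate {n : ℕ} {C : Type*}
    (p : (Fin n → C) → Fin n → ℕ) (s : Fin n → C) : Prop :=
  ∃! i : Fin n, ¬ BestResponse p s i

/-!
Some player can always improve: player `0` if it matches its predecessor, and otherwise some
other player that differs from its predecessor (if all of them copied their predecessors, every
colour would equal that of player `0`, so player `0` would match its predecessor after all).

For fairness, suppose player `i` is eventually never selected; then its colour is eventually
constant. Whenever the colour of the predecessor of `j` is eventually constant, the 0/1 payoff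
of `j` can from then on only rise, and it rises at every selection of `j`, so `j` is selected at
most once more and its colour is eventually constant as well. Going around the ring, the whole
joint strategy becomes constant, which is impossible along an improvement path.
-/

open Filter Fin.NatCast Fin.CommRing

section Paths

variable {n : ℕ} {C : Type*} {p : (Fin n → C) → Fin n → ℕ}

def IsImprovementPath (p : (Fin n → C) → Fin n → ℕ) (σ : ℕ → Fin n → C) (sel : ℕ → Fin n) :
    Prop :=
  ∀ k, StepAt p (sel k) (σ k) (σ (k + 1))

theorem StepAt.apply_ne {i : Fin n} {s s' : Fin n → C} (h : StepAt p i s s') : s' i ≠ s i := by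
  intro hi
  have hs : s' = s := funext fun j => by
    rcases eq_or_ne j i with rfl | hj
    exacts [hi, h.1 j hj]
  exact (hs ▸ h.2).false

theorem stepAt_update {i : Fin n} {s : Fin n → C} {c : C}
    (h : p s i < p (Function.update s i c) i) : StepAt p i s (Function.update s i c) :=
  ⟨fun _ hj => Function.update_of_ne hj _ _, h⟩

namespace IsImprovementPath

variable {σ : ℕ → Fin n → C} {sel : ℕ → Fin n}

theorem eventually_const_of_eventually_ne (h : IsImprovementPath p σ sel) {j : Fin n}
    (hj : ∀ᶠ m in atTop, sel m ≠ j) : ∃ c, ∀ᶠ m in atTop, σ m j = c := by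
  obtain ⟨K, hK⟩ := eventually_atTop.1 hj
  refine ⟨σ K j, eventually_atTop.2 ⟨K, fun m hm => ?_⟩⟩
  induction m, hm using Nat.le_induction with
  | base => rfl
  | succ m hm ih => exact ((h m).1 j (hK m hm).symm).trans ih

theorem not_eventually_const (h : IsImprovementPath p σ sel) (c : Fin n → C) :
    ¬ ∀ᶠ m in atTop, σ m = c := by
  intro hc
  obtain ⟨m, hm, hm'⟩ := (hc.and ((tendsto_add_atTop_nat 1).eventually hc)).exists
  exact (h m).apply_ne (by rw [hm, hm'])

end IsImprovementPath

end Paths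

namespace Fin

variable {n : ℕ} [NeZero n]

theorem forall_of_imp_sub_one {P : Fin n → Prop} (i : Fin n) (hi : P i)
    (hstep : ∀ j, P (j - 1) → P j) (j : Fin n) : P j := by
  have hshift : ∀ t : ℕ, P (i + t) := by
    intro t
    induction t with
    | zero => simpa using hi
    | succ t ih => exact hstep _ (by push_cast; ring_nf; exact ih)
  simpa using hshift (j - i).val

end Fin

section RingGame

variable {n : ℕ} [NeZero n] {C : Type*} [DecidableEq C]

theorem ringPayoff_le_one (s : Fin n → C) (i : Fin n) : ringPayoff s i ≤ 1 := by
  unfold ringPayoff; split_ifs <;> simp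

theorem ringPayoff_congr {s t : Fin n → C} {i : Fin n} (hi : s i = t i)
    (hpred : s (i - 1) = t (i - 1)) : ringPayoff s i = ringPayoff t i := by
  simp only [ringPayoff, hi, hpred]

theorem exists_stepAt_ringPayoff (hn : 2 ≤ n) [Nontrivial C] (s : Fin n → C) :
    ∃ i s', StepAt ringPayoff i s s' := by
  have : Nontrivial (Fin n) := Fin.nontrivial_iff_two_le.2 hn
  by_cases h0 : s 0 = s (0 - 1)
  · obtain ⟨c, hc⟩ := exists_ne (s (0 - 1))
    have hpred : (0 : Fin n) - 1 ≠ 0 := by simp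
    refine ⟨0, _, stepAt_update (c := c) ?_⟩
    simp only [ringPayoff, Function.update_self, Function.update_of_ne hpred, h0, hc]
    simp
  · obtain ⟨i, hi0, hi⟩ : ∃ i ≠ 0, s i ≠ s (i - 1) := by
      by_contra! hcopy
      refine h0 (Fin.forall_of_imp_sub_one (P := fun j => s j = s 0) 0 rfl ?_ _).symm
      intro j hj
      rcases eq_or_ne j 0 with rfl | hj0
      exacts [rfl, (hcopy j hj0).trans hj]
    refine ⟨i, _, stepAt_update (c := s (i - 1)) ?_⟩
    simp [ringPayoff, hi0, hi]

namespace IsImprovementPath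

variable {σ : ℕ → Fin n → C} {sel : ℕ → Fin n}

theorem ringPayoff_le_succ (h : IsImprovementPath ringPayoff σ sel) {j : Fin n} {m : ℕ}
    (hpred : σ (m + 1) (j - 1) = σ m (j - 1)) :
    ringPayoff (σ m) j ≤ ringPayoff (σ (m + 1)) j := by
  rcases eq_or_ne (sel m) j with rfl | hj
  · exact (h m).2.le
  · exact (ringPayoff_congr ((h m).1 j hj.symm) hpred).ge

theorem eventually_ne_of_eventually_const_pred (h : IsImprovementPath ringPayoff σ sel)
    {j : Fin n} {c : C} (hc : ∀ᶠ m in atTop, σ m (j - 1) = c) : ∀ᶠ m in atTop, sel m ≠ j := by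
  obtain ⟨K, hK⟩ := eventually_atTop.1 hc
  have hmono : MonotoneOn (fun m => ringPayoff (σ m) j) (Set.Ici K) :=
    monotoneOn_nat_Ici_of_le_succ fun m hm =>
      h.ringPayoff_le_succ ((hK (m + 1) (Nat.le_succ_of_le hm)).trans (hK m hm).symm)
  rw [eventually_atTop]
  by_contra! hsel
  obtain ⟨m₀, hm₀, hsel₀⟩ := hsel K
  obtain ⟨m₁, hm₁, hsel₁⟩ := hsel (m₀ + 1)
  have hrise₀ := hsel₀ ▸ (h m₀).2
  have hrise₁ := hsel₁ ▸ (h m₁).2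
  have hle : ringPayoff (σ (m₀ + 1)) j ≤ ringPayoff (σ m₁) j :=
    hmono (Set.mem_Ici.2 (by omega)) (Set.mem_Ici.2 (by omega)) hm₁
  have := ringPayoff_le_one (σ (m₁ + 1)) j
  omega

theorem eventually_const_of_eventually_const_pred (h : IsImprovementPath ringPayoff σ sel)
    {j : Fin n} (hpred : ∃ c, ∀ᶠ m in atTop, σ m (j - 1) = c) :
    ∃ c, ∀ᶠ m in atTop, σ m j = c :=
  let ⟨_, hc⟩ := hpred
  h.eventually_const_of_eventually_ne (h.eventually_ne_of_eventually_const_pred hc)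

theorem frequently_sel_eq (h : IsImprovementPath ringPayoff σ sel) (i : Fin n) :
    ∃ᶠ m in atTop, sel m = i := by
  by_contra hi
  have hfrozen : ∀ j, ∃ c, ∀ᶠ m in atTop, σ m j = c :=
    Fin.forall_of_imp_sub_one i (h.eventually_const_of_eventually_ne (not_frequently.1 hi))
      fun _ => h.eventually_const_of_eventually_const_pred
  choose c hc using hfrozen
  exact h.not_eventually_const c ((eventually_all.2 hc).mono fun _ => funext)

end IsImprovementPath

end RingGame

/-- The ring game `G` admits fairness: every improvement path in `G`
is infinite (from every joint strategy some improvement step is possible, so no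
maximal sequence of improvement steps is finite) and in every (infinite)
improvement path every player is selected infinitely often. -/
theorem ring_game_admits_fairness
    (n : ℕ) [NeZero n] (hn : 2 ≤ n)
    (C : Type*) [Fintype C] [DecidableEq C] (hC : 2 ≤ Fintype.card C) :
    (∀ s : Fin n → C, ∃ (i : Fin n) (s' : Fin n → C),
        StepAt (ringPayoff (n := n) (C := C)) i s s') ∧
    (∀ (σ : ℕ → Fin n → C) (sel : ℕ → Fin n),
        (∀ k : ℕ, StepAt (ringPayoff (n := n) (C := C)) (sel k) (σ k) (σ (k + 1))) →
        ∀ (i : Fin n) (k : ℕ), ∃ m, k ≤ m ∧ sel m = i) := by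
  have : Nontrivial C := Fintype.one_lt_card_iff_nontrivial.1 hC
  exact ⟨exists_stepAt_ringPayoff hn, fun σ sel hpath i =>
    frequently_atTop.1 (IsImprovementPath.frequently_sel_eq hpath i)⟩
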